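/- arXiv:2212.13687 — 3 statements merged into one kernel-verified Lean document; each statement's English description precedes it below -/
import Mathlib

section
/- For every real number α with α/(2π) ∉ ℤ, the symmetric limit lim_{M → ∞} ∑_{k=−M}^{M} 1/(2kπ + α) exists and equals (1/2)·cot(α/2). -/
/-!
The symmetric partial sums pair the terms `k` and `-k`, so after the substitution
`β = α / (2π)` they are the partial sums of the Mittag-Leffler expansion
`π cot (π β) = 1/β + ∑_{n ≥ 1} (1/(β - n) + 1/(β + n))`, the logarithmic derivative of Euler's
sine product; it holds on `ℂ` minus the integers and restricts to real `β`.
-/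

open Finset Filter Real SummationFilter

theorem Finset.sum_Icc_neg_eq_add_sum_range {G : Type*} [AddCommGroup G] (f : ℤ → G) (N : ℕ) :
    ∑ k ∈ Icc (-N : ℤ) N, f k = f 0 + ∑ j ∈ range N, (f (j + 1) + f (-(j + 1))) := by
  induction N with
  | zero => simp
  | succ N ih =>
    rw [Nat.cast_succ, sum_Icc_succ_eq_add_endpoints, ih, sum_range_succ]
    abel

theorem Complex.hasSum_one_div_add_intCast_symmetricIcc {x : ℂ} (hx : x ∈ integerComplement) :
    HasSum (fun k : ℤ => 1 / (x + k)) (π * cot (π * x)) (symmetricIcc ℤ) := by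
  rw [hasSum_symmetricIcc_iff]
  have hsum (N : ℕ) : ∑ k ∈ Icc (-N : ℤ) N, 1 / (x + k) = 1 / x + ∑ j ∈ range N, cotTerm x j := by
    rw [sum_Icc_neg_eq_add_sum_range]
    push_cast
    simp only [add_zero, cotTerm, ← sub_eq_add_neg, add_comm (1 / (x + _))]
  simp_rw [hsum]
  simpa using (tendsto_logDeriv_euler_cot_sub hx).const_add (1 / x)

theorem Real.hasSum_one_div_add_intCast_symmetricIcc {x : ℝ}
    (hx : x ∉ Set.range ((↑) : ℤ → ℝ)) :
    HasSum (fun k : ℤ => 1 / (x + k)) (π * cot (π * x)) (symmetricIcc ℤ) := by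
  have hx' : (x : ℂ) ∈ Complex.integerComplement := by
    rintro ⟨k, hk⟩
    exact hx ⟨k, by exact_mod_cast hk⟩
  rw [← Complex.hasSum_ofReal]
  push_cast
  exact Complex.hasSum_one_div_add_intCast_symmetricIcc hx'

/-- For `α` with `α/(2π) ∉ ℤ`, the symmetric limit
`lim_{M → ∞} ∑_{k=-M}^{M} 1/(2kπ + α)` exists and equals `(1/2) cot(α/2)`. -/
theorem symmetric_limit_eq_half_cot (α : ℝ)
    (hα : α / (2 * π) ∉ Set.range ((↑) : ℤ → ℝ)) :
    Filter.Tendsto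
      (fun M : ℕ => ∑ k ∈ Finset.Icc (-(M : ℤ)) (M : ℤ), 1 / (2 * (k : ℝ) * π + α))
      Filter.atTop (nhds (1 / 2 * Real.cot (α / 2))) := by
  have hterm (k : ℤ) : 1 / (2 * (k : ℝ) * π + α) = (2 * π)⁻¹ * (1 / (α / (2 * π) + k)) := by
    field_simp
    ring
  have hlim : (2 * π)⁻¹ * (π * cot (π * (α / (2 * π)))) = 1 / 2 * cot (α / 2) := by
    field_simp
  simp_rw [← hasSum_symmetricIcc_iff, hterm, ← hlim]
  exact (Real.hasSum_one_div_add_intCast_symmetricIcc hα).mul_left _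
end

section
/- For all integers n ≥ 1 and 1 ≤ i ≤ n, the combinatorial identity b_{n,i} = i · a_{n,i} holds; that is, ∑_{l=1}^{i} (−1)^{n−l} u(n−l, n−i) Ā(2n+1, l) = i · 2 ∑_{l=1}^{i} (−1)^{n−l} t(n−l, n−i) Ā(2n, l). -/
/-!
Write `Ā(N, l)` for `circEulerian N l`. Every permutation of `Fin (N + 2)` is, in exactly
`N + 2` ways, a rotation of one whose maximum sits in the last position, and the cyclic descents
of such a permutation are the linear descents of its first `N + 1` values plus one. Hence
`Ā(N + 2, l + 1)` is the number of permutations of `Fin (N + 1)` with `l` descents. Inserting a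
new maximum into a permutation creates a new descent unless it goes at the end or inside a
descent; this gives the Eulerian recurrence, and with it
`Ā(N + 1, l) = l Ā(N, l) + (N + 1 - l) Ā(N, l - 1)` for `N ≥ 2`, `l ≥ 1`.

Substituting this into `b_{n,i}` and shifting the index of the part carrying `Ā(2n, l - 1)`
(which vanishes at `l = 1`) expresses `b_{n,i}` through the `Ā(2n, l)`. Coefficient by
coefficient, `b_{n,i} = i a_{n,i}` then reduces to `u(j, j) = 2 t(j, j)` and, for `j ≤ k`, to
`(n - k - 1) u(k + 1, j) - (n + k + 1) u(k, j) = 2 (n - j) t(k + 1, j)`, a consequence of the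
ratio `(k + 1 + j) u(k, j) = -(k + 1 - j) u(k + 1, j)` of consecutive coefficients.
-/

open Finset Filter Real

/-- The number of cyclic descents of a permutation `σ` of `{0, …, n-1}`, read cyclically:
positions `i` with `σ(i) > σ(i+1)`, indices mod `n`. -/
def cyclicDescents (n : ℕ) (σ : Equiv.Perm (Fin n)) : ℕ :=
  (Finset.univ.filter (fun i : Fin n => σ (finRotate n i) < σ i)).card

/-- The circular Eulerian number `Ā(n,l)`: the number of circular `n`-permutations with exactly
`l` descents.  Each circular permutation has exactly `n` linear representatives (all with the
same number of cyclic descents), whence the division by `n`. -/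
def circEulerian (n l : ℕ) : ℕ :=
  (Finset.univ.filter (fun σ : Equiv.Perm (Fin n) => cyclicDescents n σ = l)).card / n

/-- The coefficient `t(k,i) = (-1)^(k-i) 2^(2i) (k/(k+i)) C(k+i, k-i)` of the Chebyshev
polynomial of the first kind, with the convention `t(0,0) = 1/2`. -/
noncomputable def tCoeff (k i : ℕ) : ℝ :=
  if k = 0 ∧ i = 0 then 1 / 2
  else (-1) ^ (k - i) * 2 ^ (2 * i) * ((k : ℝ) / ((k : ℝ) + (i : ℝ))) *
    (Nat.choose (k + i) (k - i) : ℝ)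

/-- The coefficient `u(k,i) = (-1)^(k-i) 2^(2i) C(k+i, k-i)` of the Chebyshev polynomial of the
second kind. -/
noncomputable def uCoeff (k i : ℕ) : ℝ :=
  (-1) ^ (k - i) * 2 ^ (2 * i) * (Nat.choose (k + i) (k - i) : ℝ)

/-- `a_{n,i} = 2 ∑_{l=1}^{i} (-1)^(n-l) t(n-l, n-i) Ā(2n, l)`. -/
noncomputable def aCoeff (n i : ℕ) : ℝ :=
  2 * ∑ l ∈ Finset.Icc 1 i, (-1) ^ (n - l) * tCoeff (n - l) (n - i) *
    (circEulerian (2 * n) l : ℝ)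

/-- `b_{n,i} = ∑_{l=1}^{i} (-1)^(n-l) u(n-l, n-i) Ā(2n+1, l)`. -/
noncomputable def bCoeff (n i : ℕ) : ℝ :=
  ∑ l ∈ Finset.Icc 1 i, (-1) ^ (n - l) * uCoeff (n - l) (n - i) *
    (circEulerian (2 * n + 1) l : ℝ)

open Equiv

section Descents

variable {α : Type*} [LinearOrder α] {n : ℕ}

def descentSet (f : Fin (n + 1) → α) : Finset (Fin n) :=
  {i | f i.succ < f i.castSucc}

theorem descentSet_comp_of_strictMono {β : Type*} [LinearOrder β] {g : α → β}
    (hg : StrictMono g) (f : Fin (n + 1) → α) : descentSet (g ∘ f) = descentSet f := by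
  ext i
  simp [descentSet, hg.lt_iff_lt]

theorem card_descentSet_cons (a : α) (f : Fin (n + 1) → α) :
    #(descentSet (Fin.cons a f : Fin (n + 2) → α)) =
      #(descentSet f) + if f 0 < a then 1 else 0 := by
  simp only [descentSet, card_filter, Fin.sum_univ_succ, Fin.cons_succ, Fin.castSucc_zero,
    Fin.cons_zero, ← Fin.succ_castSucc]
  rw [add_comm]

/-- Slot `p` is the gap before position `p` (slot `n + 1` is the end). These are the slots where
inserting a new maximum creates no new descent. -/
def keepSlots (f : Fin (n + 1) → α) : Finset (Fin (n + 2)) :=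
  insert (Fin.last _) ((descentSet f).image fun i => i.succ.castSucc)

theorem card_keepSlots (f : Fin (n + 1) → α) : #(keepSlots f) = #(descentSet f) + 1 := by
  rw [keepSlots, card_insert_of_notMem, card_image_of_injective]
  · exact (Fin.castSucc_injective _).comp (Fin.succ_injective _)
  · simp [Fin.ext_iff, Nat.ne_of_lt]

theorem last_mem_keepSlots (f : Fin (n + 1) → α) : Fin.last _ ∈ keepSlots f :=
  mem_insert_self _ _

theorem zero_notMem_keepSlots (f : Fin (n + 1) → α) : 0 ∉ keepSlots f := by
  simp [keepSlots, Fin.ext_iff]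

theorem succ_mem_keepSlots_cons {a : α} {f : Fin (n + 1) → α} {p : Fin (n + 2)} :
    p.succ ∈ keepSlots (Fin.cons a f : Fin (n + 2) → α) ↔
      p = 0 ∧ f 0 < a ∨ p ∈ keepSlots f := by
  simp only [keepSlots, descentSet, mem_insert, mem_image, mem_filter, mem_univ, true_and,
    Fin.exists_fin_succ]
  simp only [Fin.cons_succ, Fin.castSucc_zero, Fin.cons_zero, ← Fin.succ_castSucc,
    ← Fin.succ_last, Fin.succ_inj]
  tauto

theorem card_descentSet_insertNth {M : α} {f : Fin (n + 1) → α} (hM : ∀ i, f i < M)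
    (p : Fin (n + 2)) :
    #(descentSet (p.insertNth M f)) =
      if p ∈ keepSlots f then #(descentSet f) else #(descentSet f) + 1 := by
  induction n with
  | zero =>
    obtain rfl | rfl : p = 0 ∨ p = Fin.last 1 := by fin_cases p <;> simp
    · simp [card_descentSet_cons, hM 0, zero_notMem_keepSlots]
    · -- `simp` normalises `Fin.last 1` to `1`
      have h0 : ((1 : Fin 2).insertNth M f : Fin 2 → α) 0 = f 0 :=
        Fin.insertNth_apply_succAbove (α := fun _ => α) (Fin.last 1) M f 0
      simp [descentSet, keepSlots, h0, (hM 0).le]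
  | succ n ih =>
    obtain ⟨a, g, rfl⟩ : ∃ a g, f = Fin.cons a g :=
      ⟨f 0, Fin.tail f, (Fin.cons_self_tail f).symm⟩
    have ha : a < M := by simpa using hM 0
    have hg : ∀ i, g i < M := fun i => by simpa using hM i.succ
    cases p using Fin.cases with
    | zero => simp [card_descentSet_cons, ha, zero_notMem_keepSlots]
    | succ p =>
      simp only [Fin.insertNth_succ_cons, card_descentSet_cons, succ_mem_keepSlots_cons]
      cases p using Fin.cases with
      | zero =>
        by_cases h : g 0 < a <;>
          simp [card_descentSet_cons, hg 0, ha.not_gt, zero_notMem_keepSlots, h]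
      | succ q =>
        have h0 : (q.succ.insertNth M g : Fin (n + 2) → α) 0 = g 0 := by
          rw [← Fin.succ_succAbove_zero, Fin.insertNth_apply_succAbove]
        simp only [ih hg, h0, Fin.succ_ne_zero, false_and, false_or]
        split_ifs <;> omega

end Descents

section InsertMax

variable {m : ℕ}

def insertMax (p : Fin (m + 2)) (τ : Perm (Fin (m + 1))) : Perm (Fin (m + 2)) :=
  (finSuccEquiv' p).trans ((optionCongr τ).trans finSuccEquivLast.symm)

theorem coe_insertMax (p : Fin (m + 2)) (τ : Perm (Fin (m + 1))) :
    ⇑(insertMax p τ) = p.insertNth (Fin.last _) (Fin.castSucc ∘ τ) := by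
  rw [Fin.eq_insertNth_iff]
  constructor
  · simp [insertMax]
  · ext i
    simp [insertMax, Fin.removeNth]

@[simp]
theorem insertMax_apply_self (p : Fin (m + 2)) (τ : Perm (Fin (m + 1))) :
    insertMax p τ p = Fin.last _ := by
  simp [coe_insertMax]

theorem card_descentSet_insertMax (p : Fin (m + 2)) (τ : Perm (Fin (m + 1))) :
    #(descentSet (insertMax p τ)) =
      if p ∈ keepSlots τ then #(descentSet τ) else #(descentSet τ) + 1 := by
  rw [coe_insertMax,
    card_descentSet_insertNth (f := Fin.castSucc ∘ τ) fun _ => Fin.castSucc_lt_last _,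
    keepSlots, keepSlots, descentSet_comp_of_strictMono Fin.strictMono_castSucc]

theorem insertMax_bijective :
    Function.Bijective fun x : Perm (Fin (m + 1)) × Fin (m + 2) => insertMax x.2 x.1 := by
  rw [Fintype.bijective_iff_injective_and_card]
  refine ⟨?_, by simp [Fintype.card_perm, Nat.factorial_succ]; ring⟩
  rintro ⟨τ, p⟩ ⟨τ', p'⟩ h
  dsimp only at h
  obtain rfl : p = p' := (insertMax p' τ').injective (by
    rw [insertMax_apply_self, ← h, insertMax_apply_self])
  rw [DFunLike.ext'_iff, coe_insertMax, coe_insertMax, Fin.insertNth_inj] at h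
  simpa [Equiv.ext_iff, funext_iff] using h.2

theorem card_filter_card_descentSet_insertMax (τ : Perm (Fin (m + 1))) (k : ℕ) :
    #{p : Fin (m + 2) | #(descentSet (insertMax p τ)) = k} =
      (if #(descentSet τ) = k then k + 1 else 0) +
        (if #(descentSet τ) + 1 = k then m + 2 - k else 0) := by
  simp_rw [card_descentSet_insertMax]
  by_cases hk : #(descentSet τ) = k
  · simp [card_keepSlots, hk]
  by_cases hk' : #(descentSet τ) + 1 = k
  · simp [Finset.filter_not, card_univ_sdiff, card_keepSlots, hk, hk']
  · rw [if_neg hk, if_neg hk', card_eq_zero, filter_eq_empty_iff]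
    intro p _
    split_ifs <;> omega

end InsertMax

theorem card_filter_card_descentSet_succ (m k : ℕ) :
    #{σ : Perm (Fin (m + 2)) | #(descentSet σ) = k} =
      (k + 1) * #{τ : Perm (Fin (m + 1)) | #(descentSet τ) = k} +
        (m + 2 - k) * #{τ : Perm (Fin (m + 1)) | #(descentSet τ) + 1 = k} := by
  rw [← card_bijective _ insertMax_bijective (s := {x | #(descentSet (insertMax x.2 x.1)) = k})
    (by simp), card_filter, Fintype.sum_prod_type]
  simp only [← card_filter, card_filter_card_descentSet_insertMax]
  rw [sum_add_distrib, card_filter, card_filter, mul_sum, mul_sum]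
  simp only [mul_boole]

section Rotation

variable {n m : ℕ}

theorem cyclicDescents_mul_addRight (σ : Perm (Fin (n + 1))) (k : Fin (n + 1)) :
    cyclicDescents (n + 1) (σ * Equiv.addRight k) = cyclicDescents (n + 1) σ := by
  refine card_equiv (Equiv.addRight k) fun i => ?_
  simp [finRotate_apply, add_right_comm]

theorem cyclicDescents_eq_card_descentSet_add (σ : Perm (Fin (n + 1))) :
    cyclicDescents (n + 1) σ = #(descentSet σ) + if σ 0 < σ (Fin.last n) then 1 else 0 := by
  rw [cyclicDescents, descentSet, card_filter, card_filter, Fin.sum_univ_castSucc]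
  simp [finRotate_apply, Fin.coeSucc_eq_succ]

theorem cyclicDescents_insertMax_last (τ : Perm (Fin (m + 1))) :
    cyclicDescents (m + 2) (insertMax (Fin.last _) τ) = #(descentSet τ) + 1 := by
  rw [cyclicDescents_eq_card_descentSet_add, card_descentSet_insertMax,
    if_pos (last_mem_keepSlots _)]
  simp [coe_insertMax]

theorem insertMax_last_mul_addRight_bijective :
    Function.Bijective fun x : Perm (Fin (m + 1)) × Fin (m + 2) =>
      insertMax (Fin.last _) x.1 * Equiv.addRight x.2 := by
  rw [Fintype.bijective_iff_injective_and_card]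
  refine ⟨?_, by simp [Fintype.card_perm, Nat.factorial_succ]; ring⟩
  rintro ⟨τ, k⟩ ⟨τ', k'⟩ h
  dsimp only at h
  obtain rfl : k = k' := by
    have hval := congrArg (· (Fin.last _ - k)) h
    simp only [Perm.mul_apply, coe_addRight, sub_add_cancel, insertMax_apply_self] at hval
    have hlast : Fin.last _ - k + k' = Fin.last _ :=
      (insertMax _ τ').injective (hval.symm.trans (insertMax_apply_self _ _).symm)
    exact (add_left_cancel (hlast.trans (sub_add_cancel _ k).symm)).symm
  rw [mul_left_inj] at h
  simpa using insertMax_bijective.injective (a₁ := (τ, Fin.last _)) (a₂ := (τ', Fin.last _)) h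

end Rotation

theorem card_filter_cyclicDescents_eq (m l : ℕ) :
    #{σ : Perm (Fin (m + 2)) | cyclicDescents (m + 2) σ = l} =
      (m + 2) * #{τ : Perm (Fin (m + 1)) | #(descentSet τ) + 1 = l} := by
  rw [← card_bijective _ insertMax_last_mul_addRight_bijective
    (s := {x | #(descentSet x.1) + 1 = l})
    (by simp [cyclicDescents_mul_addRight, cyclicDescents_insertMax_last]),
    card_filter, card_filter, Fintype.sum_prod_type, mul_sum]
  refine sum_congr rfl fun τ _ => ?_
  split_ifs <;> simp

theorem circEulerian_add_two (m l : ℕ) :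
    circEulerian (m + 2) l = #{τ : Perm (Fin (m + 1)) | #(descentSet τ) + 1 = l} := by
  rw [circEulerian, card_filter_cyclicDescents_eq, Nat.mul_div_cancel_left _ (by omega)]

theorem circEulerian_zero {N : ℕ} (hN : 2 ≤ N) : circEulerian N 0 = 0 := by
  obtain ⟨m, rfl⟩ : ∃ m, N = m + 2 := ⟨N - 2, by omega⟩
  simp [circEulerian_add_two]

theorem circEulerian_succ {N l : ℕ} (hN : 2 ≤ N) (hl : 1 ≤ l) :
    circEulerian (N + 1) l = l * circEulerian N l + (N + 1 - l) * circEulerian N (l - 1) := by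
  obtain ⟨m, rfl⟩ : ∃ m, N = m + 2 := ⟨N - 2, by omega⟩
  obtain ⟨j, rfl⟩ : ∃ j, l = j + 1 := ⟨l - 1, by omega⟩
  rw [show m + 2 + 1 = m + 1 + 2 by ring, circEulerian_add_two, circEulerian_add_two,
    circEulerian_add_two, add_tsub_cancel_right, show m + 1 + 2 - (j + 1) = m + 2 - j by omega]
  simp only [add_left_inj]
  exact card_filter_card_descentSet_succ m j

theorem tCoeff_eq_div_mul_uCoeff {k : ℕ} (hk : k ≠ 0) (j : ℕ) :
    tCoeff k j = k / (k + j) * uCoeff k j := by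
  rw [tCoeff, if_neg (by omega), uCoeff]
  ring

theorem uCoeff_self (j : ℕ) : uCoeff j j = 2 * tCoeff j j := by
  rcases eq_or_ne j 0 with rfl | hj
  · simp [uCoeff, tCoeff]
  · rw [tCoeff_eq_div_mul_uCoeff hj]
    field_simp
    ring

theorem add_mul_uCoeff {j k : ℕ} (h : j ≤ k) :
    ((k : ℝ) + 1 + j) * uCoeff k j = -((k : ℝ) + 1 - j) * uCoeff (k + 1) j := by
  obtain ⟨d, rfl⟩ := Nat.exists_eq_add_of_le h
  have hchoose : ((2 * j + d + 1 : ℕ) : ℝ) * (Nat.choose (2 * j + d) d : ℝ) =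
      (Nat.choose (2 * j + d + 1) (d + 1) : ℝ) * ((d : ℝ) + 1) := by
    exact_mod_cast Nat.add_one_mul_choose_eq (2 * j + d) d
  rw [uCoeff, uCoeff, show j + d + 1 - j = d + 1 by omega, show j + d - j = d by omega,
    show j + d + 1 + j = 2 * j + d + 1 by omega, show j + d + j = 2 * j + d by omega]
  push_cast at hchoose ⊢
  rw [pow_succ]
  linear_combination (-1 : ℝ) ^ d * 2 ^ (2 * j) * hchoose

theorem uCoeff_step {j k : ℕ} (h : j ≤ k) (x : ℝ) :
    (x - (k + 1)) * uCoeff (k + 1) j - (x + (k + 1)) * uCoeff k j =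
      2 * (x - j) * tCoeff (k + 1) j := by
  rw [tCoeff_eq_div_mul_uCoeff (Nat.succ_ne_zero k)]
  have hpos : ((k : ℝ) + 1 + j) ≠ 0 := by positivity
  push_cast
  field_simp
  linear_combination (-(x + (k + 1))) * add_mul_uCoeff h

theorem neg_one_pow_uCoeff_step {n i l : ℕ} (hli : l < i) (hin : i ≤ n) :
    (-1) ^ (n - l) * uCoeff (n - l) (n - i) * l +
        (-1) ^ (n - (l + 1)) * uCoeff (n - (l + 1)) (n - i) * (2 * n - l) =
      i * (2 * ((-1) ^ (n - l) * tCoeff (n - l) (n - i))) := by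
  obtain ⟨k, hk⟩ : ∃ k, n - l = k + 1 := ⟨n - (l + 1), by omega⟩
  rw [hk, show n - (l + 1) = k by omega, pow_succ]
  have hl : (l : ℝ) = n - (k + 1) := by
    rw [eq_sub_iff_add_eq]
    exact_mod_cast (by omega : l + (k + 1) = n)
  have hi : (i : ℝ) = n - (n - i : ℕ) := by
    rw [Nat.cast_sub hin]
    ring
  rw [hl, hi]
  linear_combination (-(-1 : ℝ) ^ k) * uCoeff_step (j := n - i) (k := k) (by omega) n

theorem sum_Icc_add_sum_Icc_eq_of_shift {M : Type*} [AddCommMonoid M] {f g h : ℕ → M} {i : ℕ}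
    (hi : 1 ≤ i) (hg : g 1 = 0) (hstep : ∀ l ∈ Ico 1 i, f l + g (l + 1) = h l)
    (htop : f i = h i) :
    ∑ l ∈ Icc 1 i, f l + ∑ l ∈ Icc 1 i, g l = ∑ l ∈ Icc 1 i, h l := by
  have hshift : ∑ l ∈ Icc 1 i, g l = ∑ l ∈ Ico 1 i, g (l + 1) := by
    rw [← Ico_add_one_right_eq_Icc, sum_eq_sum_Ico_succ_bot (by omega), hg, zero_add,
      sum_Ico_add']
  rw [hshift, ← Ico_add_one_right_eq_Icc, sum_Ico_succ_top hi, sum_Ico_succ_top hi, htop,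
    add_right_comm, ← sum_add_distrib, sum_congr rfl hstep]

theorem bCoeff_eq_mul_aCoeff_general (n i : ℕ) (hi1 : 1 ≤ i) (hin : i ≤ n) :
    bCoeff n i = (i : ℝ) * aCoeff n i := by
  have hrec : ∀ l ∈ Icc 1 i, (circEulerian (2 * n + 1) l : ℝ) =
      l * circEulerian (2 * n) l + (2 * n + 1 - l : ℝ) * circEulerian (2 * n) (l - 1) := by
    intro l hl
    rw [mem_Icc] at hl
    rw [circEulerian_succ (by omega) hl.1]
    push_cast [Nat.cast_sub (show l ≤ 2 * n + 1 by omega)]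
    ring
  rw [bCoeff, aCoeff, mul_sum, mul_sum, sum_congr rfl fun l hl => by rw [hrec l hl, mul_add],
    sum_add_distrib]
  apply sum_Icc_add_sum_Icc_eq_of_shift hi1
  · simp [circEulerian_zero (show 2 ≤ 2 * n by omega)]
  · intro l hl
    rw [mem_Ico] at hl
    push_cast
    linear_combination (circEulerian (2 * n) l : ℝ) * neg_one_pow_uCoeff_step hl.2 hin
  · rw [uCoeff_self]
    ring

/-- The combinatorial identity `b_{n,i} = i · a_{n,i}` for `n ≥ 1` and `1 ≤ i ≤ n`. -/
theorem bCoeff_eq_mul_aCoeff (n i : ℕ) (hn : 1 ≤ n) (hi1 : 1 ≤ i) (hin : i ≤ n) :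
    bCoeff n i = (i : ℝ) * aCoeff n i :=
  bCoeff_eq_mul_aCoeff_general n i hi1 hin
end

section
/- For every integer n ≥ 1, lim_{N → ∞} (2/φ(N)) · ∑_{χ mod N, χ(−1) = (−1)^n} L(n, χ) = 1, where the sum runs over all Dirichlet characters modulo N whose parity satisfies χ(−1) = (−1)^n and φ is Euler's totient function. -/
/-!
Orthogonality of characters turns the average over characters of parity `ε = (-1)ⁿ` into the
L-function of `δ₁ + ε δ₋₁` on `ZMod N`. For real `t > 1` its series is
`∑ₘ (Nm + 1)^(-t) + ε (Nm + N - 1)^(-t)`, which is `1` up to terms supported on `k ≥ N - 1`.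
For `ε = 1` these add up to at most `2 (N - 1)^(-t) ζ(t)`. For `ε = -1` the series
`1 - (N - 1)^(-t) + (N + 1)^(-t) - (2N - 1)^(-t) + ⋯` alternates, so it lies within
`(N - 1)^(-t) ≤ 1 / (N - 1)` of `1` uniformly in `t > 1`; as `δ₁ - δ₋₁` has sum zero its
L-function is entire, and the bound persists at `t = 1`.
-/

open Finset Filter Real

lemma tsum_sub_sub_mem_Icc_of_interlaced {a b : ℕ → ℝ} (ha : Summable a) (hb : Summable b)
    (hba : ∀ m, b (m + 1) ≤ a (m + 1)) (hab : ∀ m, a (m + 1) ≤ b m) :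
    ∑' m, (a m - b m) - a 0 ∈ Set.Icc (-b 0) 0 := by
  have ha' : Summable fun m => a (m + 1) := (summable_nat_add_iff 1).mpr ha
  have hb' : Summable fun m => b (m + 1) := (summable_nat_add_iff 1).mpr hb
  have hsplit : ∑' m, (a m - b m) - a 0 = ∑' m, a (m + 1) - (b 0 + ∑' m, b (m + 1)) := by
    rw [ha.tsum_sub hb, ha.tsum_eq_zero_add, hb.tsum_eq_zero_add]
    ring
  rw [hsplit]
  constructor
  · linarith [hb'.tsum_le_tsum hba ha']
  · linarith [ha'.tsum_le_tsum hab hb, hb.tsum_eq_zero_add]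

namespace Real

variable {x N t : ℝ}

lemma rpow_neg_le_inv (hx : 1 ≤ x) (ht : 1 ≤ t) : x ^ (-t) ≤ x⁻¹ := by
  rw [← rpow_neg_one]
  exact rpow_le_rpow_of_exponent_le hx (neg_le_neg ht)

lemma summable_nat_add_one_rpow_neg (ht : 1 < t) :
    Summable fun m : ℕ => ((m : ℝ) + 1) ^ (-t) := by
  simpa using (summable_nat_add_iff 1).mpr (summable_nat_rpow.mpr (neg_lt_neg ht))

lemma mul_nat_add_one_pos (hN : 0 ≤ N) (m : ℕ) : 0 < N * m + 1 := by
  nlinarith [(Nat.cast_nonneg m : (0 : ℝ) ≤ m)]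

lemma mul_nat_add_sub_one_pos (hN : 2 ≤ N) (m : ℕ) : 0 < N * m + (N - 1) := by
  nlinarith [(Nat.cast_nonneg m : (0 : ℝ) ≤ m)]

lemma rpow_neg_mul_nat_add_sub_one_le (hN : 2 ≤ N) (ht : 0 ≤ t) (m : ℕ) :
    (N * m + (N - 1)) ^ (-t) ≤ (N - 1) ^ (-t) * ((m : ℝ) + 1) ^ (-t) := by
  rw [← mul_rpow (by linarith) (by positivity)]
  exact rpow_le_rpow_of_nonpos (by nlinarith) (by linarith) (by linarith)

lemma summable_rpow_neg_mul_nat_add_one (hN : 1 ≤ N) (ht : 1 < t) :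
    Summable fun m : ℕ => (N * m + 1) ^ (-t) :=
  (summable_nat_add_one_rpow_neg ht).of_nonneg_of_le
    (fun m => rpow_nonneg (mul_nat_add_one_pos (by linarith) m).le _)
    fun m => rpow_le_rpow_of_nonpos (by positivity)
      (by nlinarith [(Nat.cast_nonneg m : (0 : ℝ) ≤ m)]) (by linarith)

lemma summable_rpow_neg_mul_nat_add_sub_one (hN : 2 ≤ N) (ht : 1 < t) :
    Summable fun m : ℕ => (N * m + (N - 1)) ^ (-t) :=
  ((summable_nat_add_one_rpow_neg ht).mul_left _).of_nonneg_of_le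
    (fun m => rpow_nonneg (mul_nat_add_sub_one_pos hN m).le _)
    (rpow_neg_mul_nat_add_sub_one_le hN (by linarith))

lemma rpow_neg_mul_nat_add_one_le (hN : 2 ≤ N) (ht : 0 ≤ t) (m : ℕ) :
    (N * (m + 1 : ℕ) + 1) ^ (-t) ≤ (N * m + (N - 1)) ^ (-t) :=
  rpow_le_rpow_of_nonpos (mul_nat_add_sub_one_pos hN m) (by push_cast; linarith) (by linarith)

lemma abs_tsum_rpow_neg_sub_sub_one_le (hN : 2 ≤ N) (ht : 1 < t) :
    |∑' m : ℕ, ((N * m + 1) ^ (-t) - (N * m + (N - 1)) ^ (-t)) - 1| ≤ (N - 1) ^ (-t) := by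
  have h := tsum_sub_sub_mem_Icc_of_interlaced
    (summable_rpow_neg_mul_nat_add_one (N := N) (by linarith) ht)
    (summable_rpow_neg_mul_nat_add_sub_one hN ht)
    (fun m => rpow_le_rpow_of_nonpos (mul_nat_add_one_pos (by linarith) _)
      (by push_cast; linarith) (by linarith))
    (rpow_neg_mul_nat_add_one_le hN (by linarith))
  simp only [Nat.cast_zero, mul_zero, zero_add, one_rpow] at h
  exact abs_le.mpr ⟨h.1, h.2.trans (rpow_nonneg (by linarith) _)⟩

lemma abs_tsum_rpow_neg_add_sub_one_le (hN : 2 ≤ N) (ht : 1 < t) :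
    |∑' m : ℕ, ((N * m + 1) ^ (-t) + (N * m + (N - 1)) ^ (-t)) - 1|
      ≤ 2 * (N - 1) ^ (-t) * ∑' m : ℕ, ((m : ℝ) + 1) ^ (-t) := by
  set a : ℕ → ℝ := fun m => (N * m + 1) ^ (-t)
  set b : ℕ → ℝ := fun m => (N * m + (N - 1)) ^ (-t)
  have ha : Summable a := summable_rpow_neg_mul_nat_add_one (by linarith) ht
  have hb : Summable b := summable_rpow_neg_mul_nat_add_sub_one hN ht
  have hsplit : ∑' m, (a m + b m) - 1 = ∑' m, a (m + 1) + ∑' m, b m := by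
    rw [ha.tsum_add hb, ha.tsum_eq_zero_add]
    simp only [a, Nat.cast_zero, mul_zero, zero_add, one_rpow]
    ring
  have ha_le : ∑' m, a (m + 1) ≤ ∑' m, b m :=
    ((summable_nat_add_iff 1).mpr ha).tsum_le_tsum (rpow_neg_mul_nat_add_one_le hN (by linarith))
      hb
  have hb_le : ∑' m, b m ≤ (N - 1) ^ (-t) * ∑' m : ℕ, ((m : ℝ) + 1) ^ (-t) := by
    rw [← tsum_mul_left]
    exact hb.tsum_le_tsum (rpow_neg_mul_nat_add_sub_one_le hN (by linarith))
      ((summable_nat_add_one_rpow_neg ht).mul_left _)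
  have ha_nonneg : 0 ≤ ∑' m, a (m + 1) :=
    tsum_nonneg fun m => rpow_nonneg (mul_nat_add_one_pos (by linarith) _).le _
  rw [hsplit, abs_of_nonneg (add_nonneg ha_nonneg (ha_nonneg.trans ha_le))]
  linarith

end Real

namespace ZMod

variable {N : ℕ} [NeZero N]

noncomputable def parityDelta (N : ℕ) (ε : ℂ) : ZMod N → ℂ :=
  fun k => (if k = 1 then 1 else 0) + ε * (if k = -1 then 1 else 0)

lemma sum_parityDelta_mul (ε : ℂ) (x : ZMod N → ℂ) :
    ∑ j, parityDelta N ε j * x j = x 1 + ε * x (-1) := by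
  simp only [parityDelta, add_mul, mul_assoc, ite_mul, one_mul, zero_mul, sum_add_distrib,
    ← mul_sum, sum_ite_eq', mem_univ, if_true]

lemma hasSum_ofReal_rpow_neg_mul_add_val (j : ZMod N) {t : ℝ} (ht : 1 < t) :
    HasSum (fun m : ℕ => (((N * m + j.val : ℝ) ^ (-t) : ℝ) : ℂ))
      ((N : ℂ) ^ (-(t : ℂ)) * HurwitzZeta.hurwitzZeta (toAddCircle j) t) := by
  have hN : (0 : ℝ) < N := Nat.cast_pos.mpr (NeZero.pos N)
  have hj : (j.val / N : ℝ) ∈ Set.Icc 0 1 :=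
    ⟨by positivity, (div_le_one hN).mpr (Nat.cast_le.mpr (val_lt j).le)⟩
  rw [toAddCircle_apply]
  refine ((HurwitzZeta.hasSum_hurwitzZeta_of_one_lt_re hj (by simpa using ht)).mul_left
    _).congr_fun fun m => ?_
  have hmj : (0 : ℝ) ≤ m + j.val / N := by positivity
  rw [show (N * m + j.val : ℝ) = N * (m + j.val / N) by field_simp, mul_rpow hN.le hmj,
    Complex.ofReal_mul, Complex.ofReal_cpow hN.le, Complex.ofReal_cpow hmj, Complex.ofReal_neg,
    Complex.cpow_neg, Complex.cpow_neg, Complex.cpow_neg, one_div]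
  push_cast
  ring

lemma hasSum_LFunction_of_one_lt (Φ : ZMod N → ℂ) {t : ℝ} (ht : 1 < t) :
    HasSum (fun m : ℕ => ∑ j, Φ j * (((N * m + j.val : ℝ) ^ (-t) : ℝ) : ℂ))
      (LFunction Φ t) := by
  rw [LFunction, mul_sum]
  refine hasSum_sum fun j _ => ?_
  rw [mul_left_comm]
  exact (hasSum_ofReal_rpow_neg_mul_add_val j ht).mul_left (Φ j)

lemma LFunction_parityDelta_eq_tsum (hN : 2 ≤ N) (ε : ℝ) {t : ℝ} (ht : 1 < t) :
    LFunction (parityDelta N ε) t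
      = ↑(∑' m : ℕ, ((N * m + 1 : ℝ) ^ (-t) + ε * (N * m + (N - 1) : ℝ) ^ (-t))) := by
  have : Fact (1 < N) := ⟨hN⟩
  have hval : ((-1 : ZMod N).val : ℝ) = N - 1 := by
    rw [val_neg_of_ne_zero, val_one, Nat.cast_sub (by omega), Nat.cast_one]
  have h := (hasSum_LFunction_of_one_lt (parityDelta N ε) ht).congr_fun
    (g := fun m : ℕ => (((N * m + 1 : ℝ) ^ (-t) + ε * (N * m + (N - 1) : ℝ) ^ (-t) : ℝ) : ℂ))
    fun m => by simp only [sum_parityDelta_mul, val_one, hval]; push_cast; ring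
  rw [← h.tsum_eq, Complex.ofReal_tsum]

lemma norm_LFunction_parityDelta_one_sub_one_le (hN : 2 ≤ N) {t : ℝ} (ht : 1 < t) :
    ‖LFunction (parityDelta N 1) t - 1‖ ≤ 2 * (∑' m : ℕ, ((m : ℝ) + 1) ^ (-t)) / (N - 1) := by
  have hN' : (2 : ℝ) ≤ N := by exact_mod_cast hN
  rw [← Complex.ofReal_one, LFunction_parityDelta_eq_tsum hN 1 ht, ← Complex.ofReal_sub,
    Complex.norm_real, norm_eq_abs]
  simp only [one_mul]
  have hζ : 0 ≤ ∑' m : ℕ, ((m : ℝ) + 1) ^ (-t) := tsum_nonneg fun m => by positivity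
  calc _ ≤ 2 * (N - 1 : ℝ) ^ (-t) * ∑' m : ℕ, ((m : ℝ) + 1) ^ (-t) :=
        abs_tsum_rpow_neg_add_sub_one_le hN' ht
    _ ≤ 2 * (N - 1 : ℝ)⁻¹ * ∑' m : ℕ, ((m : ℝ) + 1) ^ (-t) := by
        gcongr
        exact rpow_neg_le_inv (by linarith) ht.le
    _ = _ := by ring

lemma norm_LFunction_parityDelta_neg_one_sub_one_le (hN : 2 ≤ N) {t : ℝ} (ht : 1 ≤ t) :
    ‖LFunction (parityDelta N (-1)) t - 1‖ ≤ ((N : ℝ) - 1)⁻¹ := by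
  have hN' : (2 : ℝ) ≤ N := by exact_mod_cast hN
  have hgt : ∀ t ∈ Set.Ioi (1 : ℝ), ‖LFunction (parityDelta N (-1)) t - 1‖ ≤ ((N : ℝ) - 1)⁻¹ := by
    intro t (ht : 1 < t)
    rw [← Complex.ofReal_one, ← Complex.ofReal_neg, LFunction_parityDelta_eq_tsum hN (-1) ht,
      ← Complex.ofReal_sub, Complex.norm_real, norm_eq_abs]
    simp only [neg_one_mul, ← sub_eq_add_neg]
    exact (abs_tsum_rpow_neg_sub_sub_one_le hN' ht).trans (rpow_neg_le_inv (by linarith) ht.le)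
  have hcont : Continuous fun t : ℝ => ‖LFunction (parityDelta N (-1)) t - 1‖ :=
    (((differentiable_LFunction_of_sum_zero (by simpa using sum_parityDelta_mul (N := N) (-1) 1)
      ).continuous.comp Complex.continuous_ofReal).sub continuous_const).norm
  have hclosed : IsClosed {t : ℝ | ‖LFunction (parityDelta N (-1)) t - 1‖ ≤ ((N : ℝ) - 1)⁻¹} :=
    isClosed_le hcont continuous_const
  exact closure_minimal hgt hclosed (by rwa [closure_Ioi] : t ∈ closure (Set.Ioi 1))

end ZMod

namespace DirichletCharacter

variable {N : ℕ}

lemma ite_apply_neg_one_eq {ε : ℂ} (hε : ε = 1 ∨ ε = -1) (χ : DirichletCharacter ℂ N)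
    (j : ZMod N) : (if χ (-1) = ε then χ j else 0) = (χ j + ε * χ (-j)) / 2 := by
  have hneg : χ (-j) = χ (-1) * χ j := by rw [← map_mul, neg_one_mul]
  rcases χ.even_or_odd with h | h <;> rw [hneg] <;> simp only [Even, Odd] at h <;>
    rcases hε with rfl | rfl <;> norm_num [h]

variable [NeZero N]

open scoped Classical in
lemma sum_filter_apply_neg_one_eq {ε : ℂ} (hε : ε = 1 ∨ ε = -1) (j : ZMod N) :
    ∑ χ ∈ univ.filter (fun χ : DirichletCharacter ℂ N => χ (-1) = ε), χ j
      = N.totient / 2 * ZMod.parityDelta N ε j := by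
  simp only [sum_filter, ite_apply_neg_one_eq hε, ← sum_div, sum_add_distrib, ← mul_sum,
    sum_characters_eq, ZMod.parityDelta, neg_eq_iff_eq_neg]
  split_ifs <;> ring

open scoped Classical in
lemma two_div_totient_mul_sum_filter_LFunction {ε : ℂ} (hε : ε = 1 ∨ ε = -1) (s : ℂ) :
    2 / N.totient * ∑ χ ∈ univ.filter (fun χ : DirichletCharacter ℂ N => χ (-1) = ε),
        LFunction χ s = ZMod.LFunction (ZMod.parityDelta N ε) s := by
  have hφ : (N.totient : ℂ) ≠ 0 := by exact_mod_cast (Nat.totient_pos.mpr (NeZero.pos N)).ne'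
  simp only [LFunction, ZMod.LFunction, ← mul_sum, sum_comm (s := univ.filter _), ← sum_mul,
    sum_filter_apply_neg_one_eq hε, mul_assoc]
  field_simp

open scoped Classical in
lemma exists_norm_two_div_totient_mul_sum_LFunction_sub_one_le {n : ℕ} (hn : 1 ≤ n) :
    ∃ C : ℝ, ∀ (N : ℕ) [NeZero N], 2 ≤ N →
      ‖2 / N.totient * ∑ χ ∈ univ.filter (fun χ : DirichletCharacter ℂ N => χ (-1) = (-1) ^ n),
          LFunction χ n - 1‖ ≤ C / (N - 1) := by
  rcases n.even_or_odd with hn_even | hn_odd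
  · have ht : 1 < (n : ℝ) := by
      have := hn_even.two_dvd
      exact_mod_cast (by omega : 1 < n)
    refine ⟨2 * ∑' m : ℕ, ((m : ℝ) + 1) ^ (-(n : ℝ)), fun N _ hN => ?_⟩
    rw [hn_even.neg_one_pow, two_div_totient_mul_sum_filter_LFunction (.inl rfl)]
    exact_mod_cast ZMod.norm_LFunction_parityDelta_one_sub_one_le hN ht
  · refine ⟨1, fun N _ hN => ?_⟩
    rw [hn_odd.neg_one_pow, two_div_totient_mul_sum_filter_LFunction (.inr rfl), one_div]
    exact_mod_cast
      ZMod.norm_LFunction_parityDelta_neg_one_sub_one_le hN (t := n) (by exact_mod_cast hn)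

end DirichletCharacter

open scoped Classical in
/-- For every `n ≥ 1`, `lim_{N → ∞} (2/φ(N)) ∑_{χ mod N, χ(-1)=(-1)^n} L(n,χ) = 1` (the limit
over moduli `N` is expressed via the shifted sequence `N = M + 1`). -/
theorem average_LFunction_tendsto_one (n : ℕ) (hn : 1 ≤ n) :
    Filter.Tendsto
      (fun M : ℕ =>
        (2 / (Nat.totient (M + 1) : ℂ)) *
          ∑ χ ∈ Finset.univ.filter
              (fun χ : DirichletCharacter ℂ (M + 1) => χ (-1) = (-1) ^ n),
            DirichletCharacter.LFunction χ ((n : ℕ) : ℂ))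
      Filter.atTop (nhds 1) := by
  obtain ⟨C, hC⟩ := DirichletCharacter.exists_norm_two_div_totient_mul_sum_LFunction_sub_one_le hn
  rw [← tendsto_sub_nhds_zero_iff]
  refine squeeze_zero_norm' ?_ (tendsto_const_div_atTop_nhds_zero_nat C)
  filter_upwards [eventually_ge_atTop 1] with M hM
  simpa using hC (M + 1) (by omega)
end
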